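/- Let λ > 0, a > 0, and 0 < ρ < 1, and let hₙ(x) = (1−ρ) · (d/dx) Σ_{m=0}^{n} (−1)^m · λ^m · (x − a·m)^m / m! · exp(λ·(x − a·m)) be the Erlang functions. Then h₁(a) = h₀(a) − λ·(1−ρ), and for every n ≥ 2, hₙ(n·a) = h_{n−1}(n·a). -/

import Mathlib

/-!
Differentiating term by term, `hₙ − hₙ₋₁` is `(1 − ρ)` times the derivative of the `n`-th
summand, a constant multiple of `(x − n a)ⁿ · exp (λ (x − n a))`. At `x = n a` that derivative
is the constant `−λ` for `n = 1` and vanishes for `n ≥ 2`.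
-/

open Finset Nat Real

noncomputable def erlangTerm (lam a : ℝ) (m : ℕ) (y : ℝ) : ℝ :=
  (-1 : ℝ) ^ m * lam ^ m * (y - a * m) ^ m / (m ! : ℝ) * exp (lam * (y - a * m))

lemma hasDerivAt_pow_sub_mul_exp (lam c : ℝ) (m : ℕ) (x : ℝ) :
    HasDerivAt (fun y => (y - c) ^ m * exp (lam * (y - c)))
      ((m * (x - c) ^ (m - 1) + lam * (x - c) ^ m) * exp (lam * (x - c))) x := by
  have hpow : HasDerivAt (fun y => (y - c) ^ m) (m * (x - c) ^ (m - 1)) x := by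
    simpa using ((hasDerivAt_id x).sub_const c).fun_pow m
  have hexp : HasDerivAt (fun y => exp (lam * (y - c))) (exp (lam * (x - c)) * lam) x := by
    simpa using (((hasDerivAt_id x).sub_const c).const_mul lam).exp
  refine (hpow.fun_mul hexp).congr_deriv ?_
  ring

lemma erlangTerm_eq_const_mul (lam a : ℝ) (m : ℕ) :
    erlangTerm lam a m =
      fun y => (-1 : ℝ) ^ m * lam ^ m / (m ! : ℝ) * ((y - a * m) ^ m * exp (lam * (y - a * m))) := by
  ext y
  simp only [erlangTerm]
  ring

lemma hasDerivAt_erlangTerm (lam a : ℝ) (m : ℕ) (x : ℝ) :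
    HasDerivAt (erlangTerm lam a m)
      ((-1 : ℝ) ^ m * lam ^ m / (m ! : ℝ) *
        ((m * (x - a * m) ^ (m - 1) + lam * (x - a * m) ^ m) * exp (lam * (x - a * m)))) x := by
  rw [erlangTerm_eq_const_mul]
  exact (hasDerivAt_pow_sub_mul_exp lam (a * m) m x).const_mul _

lemma deriv_erlangTerm_one (lam a : ℝ) : deriv (erlangTerm lam a 1) a = -lam := by
  simp [(hasDerivAt_erlangTerm lam a 1 a).deriv]

lemma deriv_erlangTerm_breakpoint (lam a : ℝ) {m : ℕ} (hm : 2 ≤ m) :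
    deriv (erlangTerm lam a m) (m * a) = 0 := by
  have hzero : (m : ℝ) * a - a * m = 0 := by ring
  simp [(hasDerivAt_erlangTerm lam a m _).deriv, hzero, zero_pow (by omega : m - 1 ≠ 0),
    zero_pow (by omega : m ≠ 0)]

lemma deriv_sum_erlangTerm (lam a : ℝ) (n : ℕ) (x : ℝ) :
    deriv (fun y => ∑ m ∈ range n, erlangTerm lam a m y) x =
      ∑ m ∈ range n, deriv (erlangTerm lam a m) x :=
  deriv_fun_sum fun m _ => (hasDerivAt_erlangTerm lam a m x).differentiableAt

theorem stmt_10_general (lam a ρ : ℝ) (h : ℕ → ℝ → ℝ)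
    (hh : ∀ (n : ℕ) (x : ℝ), h n x = (1 - ρ) *
      deriv (fun y : ℝ => ∑ m ∈ Finset.range (n + 1),
        (-1 : ℝ) ^ m * lam ^ m * (y - a * (m : ℝ)) ^ m / (Nat.factorial m : ℝ)
          * Real.exp (lam * (y - a * (m : ℝ)))) x) :
    h 1 a = h 0 a - lam * (1 - ρ)
      ∧ ∀ n : ℕ, 2 ≤ n → h n ((n : ℝ) * a) = h (n - 1) ((n : ℝ) * a) := by
  have hval : ∀ n x, h n x = (1 - ρ) * ∑ m ∈ range (n + 1), deriv (erlangTerm lam a m) x :=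
    fun n x => (hh n x).trans (congrArg _ (deriv_sum_erlangTerm lam a (n + 1) x))
  refine ⟨?_, fun n hn => ?_⟩
  · rw [hval, hval, sum_range_succ, deriv_erlangTerm_one]
    ring
  · obtain ⟨k, rfl⟩ : ∃ k, n = k + 1 := ⟨n - 1, by omega⟩
    rw [hval, hval, sum_range_succ, deriv_erlangTerm_breakpoint lam a hn, Nat.add_sub_cancel]
    ring

/-- With `hₙ` the Erlang pieces of the equilibrium M/D/1
waiting-time density, `h₁(a) = h₀(a) − λ·(1−ρ)` (jump discontinuity at `x = a`),
and for every `n ≥ 2`, `hₙ(n·a) = h_{n−1}(n·a)` (continuity at later breakpoints). -/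
theorem stmt_10 (lam a ρ : ℝ) (h : ℕ → ℝ → ℝ)
    (hlam : 0 < lam) (ha : 0 < a) (hρ0 : 0 < ρ) (hρ1 : ρ < 1)
    (hh : ∀ (n : ℕ) (x : ℝ), h n x = (1 - ρ) *
      deriv (fun y : ℝ => ∑ m ∈ Finset.range (n + 1),
        (-1 : ℝ) ^ m * lam ^ m * (y - a * (m : ℝ)) ^ m / (Nat.factorial m : ℝ)
          * Real.exp (lam * (y - a * (m : ℝ)))) x) :
    h 1 a = h 0 a - lam * (1 - ρ)
      ∧ ∀ n : ℕ, 2 ≤ n → h n ((n : ℝ) * a) = h (n - 1) ((n : ℝ) * a) :=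
  stmt_10_general lam a ρ h hh
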